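/- Let f : ℝ → ℝ be an orientation-preserving homeomorphism, let ℓ(x) = x + 1, and let x₀ ∈ ℝ with f(x₀) = y₀, where the fractional parts of x₀ and y₀ are distinct and both nonzero. Then for every open neighborhood V of the fractional part of x₀ contained in (0,1), there exist homeomorphisms φ of ℝ, arbitrarily C⁰-close to the identity, commuting with ℓ, equal to the identity outside the ℤ-translates of V, and satisfying φ⁻¹(f(φ(x₀))) ≠ y₀. -/
import Mathlib

open Set Filter

/-- The bump function `B t = max 0 (min (t-c) (d-t))` is "reverse 1-Lipschitz". -/
lemma bump_lip (c d t s : ℝ) (h : t ≤ s) :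
    max 0 (min (t - c) (d - t)) - (s - t) ≤ max 0 (min (s - c) (d - s)) := by
  simp only [max_def, min_def]
  split_ifs <;> linarith

lemma bump_zero_left (c d t : ℝ) (h : t ≤ c) : max 0 (min (t - c) (d - t)) = 0 := by
  have : min (t - c) (d - t) ≤ 0 := le_trans (min_le_left _ _) (by linarith)
  simp [max_eq_left this]

lemma bump_zero_right (c d t : ℝ) (h : d ≤ t) : max 0 (min (t - c) (d - t)) = 0 := by
  have : min (t - c) (d - t) ≤ 0 := le_trans (min_le_right _ _) (by linarith)
  simp [max_eq_left this]

lemma bump_le (c d t : ℝ) (h : c ≤ d) : max 0 (min (t - c) (d - t)) ≤ (d - c) / 2 := by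
  have h1 := min_le_left (t - c) (d - t)
  have h2 := min_le_right (t - c) (d - t)
  apply max_le (by linarith)
  linarith

lemma bump_lt_one (c d t m : ℝ) (hc : 0 < c) (hd : d < 1) (ht0 : 0 ≤ t) (ht1 : t < 1)
    (hm0 : 0 < m) (hm1 : m ≤ 1) : t + m * max 0 (min (t - c) (d - t)) < 1 := by
  rcases le_or_gt d t with h | h
  · rw [bump_zero_right c d t h]; linarith
  · have h1 : max 0 (min (t - c) (d - t)) ≤ d - t := by
      apply max_le (by linarith)
      exact min_le_right _ _
    have h0 : 0 ≤ max 0 (min (t - c) (d - t)) := le_max_left _ _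
    nlinarith

/-- Perturbation lemma: if `f` is an orientation-preserving homeomorphism of `ℝ`,
`f(x₀) = y₀`, and the fractional parts of `x₀` and `y₀` are distinct and nonzero, then
for every open neighborhood `V ⊆ (0,1)` of the fractional part of `x₀` there are
homeomorphisms `φ` of `ℝ`, arbitrarily `C⁰`-close to the identity, commuting with the
unit translation, equal to the identity outside the `ℤ`-translates of `V`, with
`φ⁻¹(f(φ(x₀))) ≠ y₀`. -/
theorem perturbation_lemma (f : ℝ ≃ₜ ℝ) (hf : StrictMono f) (x₀ y₀ : ℝ)
    (hxy : f x₀ = y₀) (h1 : Int.fract x₀ ≠ Int.fract y₀)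
    (h2 : Int.fract x₀ ≠ 0) (h3 : Int.fract y₀ ≠ 0)
    (V : Set ℝ) (hV : IsOpen V) (hx₀V : Int.fract x₀ ∈ V) (hVsub : V ⊆ Set.Ioo 0 1) :
    ∀ ε > 0, ∃ φ : ℝ ≃ₜ ℝ, StrictMono φ ∧ (∀ x : ℝ, φ (x + 1) = φ x + 1) ∧
      (∀ x : ℝ, |φ x - x| < ε) ∧ (∀ x : ℝ, Int.fract x ∉ V → φ x = x) ∧
      φ.symm (f (φ x₀)) ≠ y₀ := by
  intro ε hε
  set a := Int.fract x₀ with ha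
  set b := Int.fract y₀ with hb
  obtain ⟨ha0, ha1⟩ := hVsub hx₀V
  obtain ⟨r, hr, hball⟩ := Metric.isOpen_iff.mp hV a hx₀V
  set s : ℝ := min (min r |a - b|) (min a (1 - a)) / 2 with hs
  have hab : |a - b| > 0 := abs_pos.mpr (sub_ne_zero.mpr h1)
  have hs0 : 0 < s := by
    have : 0 < min (min r |a - b|) (min a (1 - a)) := by
      simp only [lt_min_iff]; exact ⟨⟨hr, hab⟩, ha0, by linarith⟩
    simp only [hs]; linarith
  set c : ℝ := a - s with hc
  set d : ℝ := a + s with hd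
  have hsr : 2 * s ≤ r := by
    have h1' := min_le_left (min r |a - b|) (min a (1 - a))
    have h2' := min_le_left r |a - b|
    simp only [hs]; linarith
  have hsab : 2 * s ≤ |a - b| := by
    have h1' := min_le_left (min r |a - b|) (min a (1 - a))
    have h2' := min_le_right r |a - b|
    simp only [hs]; linarith
  have hsa : 2 * s ≤ a := by
    have h1' := min_le_right (min r |a - b|) (min a (1 - a))
    have h2' := min_le_left a (1 - a)
    simp only [hs]; linarith
  have hsa1 : 2 * s ≤ 1 - a := by
    have h1' := min_le_right (min r |a - b|) (min a (1 - a))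
    have h2' := min_le_right a (1 - a)
    simp only [hs]; linarith
  have hc0 : 0 < c := by simp only [hc]; linarith
  have hd1 : d < 1 := by simp only [hd]; linarith
  have hcd : c < d := by simp only [hc, hd]; linarith
  -- b is outside [c, d]
  have hbout : b ≤ c ∨ d ≤ b := by
    rcases le_or_gt b a with h | h
    · left; rw [abs_of_nonneg (by linarith : (0:ℝ) ≤ a - b)] at hsab
      simp only [hc]; linarith
    · right; rw [abs_of_nonpos (by linarith : a - b ≤ 0)] at hsab
      simp only [hd]; linarith
  -- the bump function
  set B : ℝ → ℝ := fun t => max 0 (min (t - c) (d - t)) with hB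
  have hBnn : ∀ t, 0 ≤ B t := fun t => le_max_left _ _
  have hBle1 : ∀ t, B t ≤ 1 := by
    intro t
    have := bump_le c d t (le_of_lt hcd)
    simp only [hB]
    simp only [hc, hd] at this ⊢
    linarith
  set m : ℝ := min ε 1 / 2 with hm
  have hm0 : 0 < m := by
    have : 0 < min ε 1 := lt_min hε one_pos
    simp only [hm]; linarith
  have hm1 : m ≤ 1 / 2 := by
    have := min_le_right ε 1
    simp only [hm]; linarith
  have hmε : m < ε := by
    have h' := min_le_left ε 1
    have h'' := min_le_right ε 1
    simp only [hm]
    rcases le_or_gt ε 1 with h | h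
    · linarith
    · linarith
  -- the perturbation
  set g : ℝ → ℝ := fun x => x + m * B (Int.fract x) with hg
  have hfr_eq : ∀ x : ℝ, Int.fract x = x - (⌊x⌋ : ℝ) := fun x => rfl
  have hgfloor : ∀ x : ℝ, g x < (⌊x⌋ : ℝ) + 1 := by
    intro x
    have key : Int.fract x + m * B (Int.fract x) < 1 :=
      bump_lt_one c d (Int.fract x) m hc0 hd1 (Int.fract_nonneg x) (Int.fract_lt_one x)
        hm0 (by linarith)
    rw [hfr_eq x] at key
    simp only [hg]
    rw [hfr_eq x]
    linarith
  have hmono : StrictMono g := by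
    intro x y hxy'
    rcases eq_or_ne ⌊x⌋ ⌊y⌋ with hfl | hfl
    · have hfr : Int.fract y - Int.fract x = y - x := by
        rw [hfr_eq x, hfr_eq y, hfl]; ring
      have hlip := bump_lip c d (Int.fract x) (Int.fract y) (by linarith)
      have hmul : m * (B (Int.fract x) - B (Int.fract y)) ≤ m * (Int.fract y - Int.fract x) := by
        apply mul_le_mul_of_nonneg_left _ (le_of_lt hm0)
        simp only [hB]; linarith
      simp only [hg]
      rw [hfr] at hmul
      nlinarith
    · have hfl' : ⌊x⌋ < ⌊y⌋ :=
        lt_of_le_of_ne (Int.floor_le_floor (le_of_lt hxy')) hfl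
      have h1' : g x < (⌊x⌋ : ℝ) + 1 := hgfloor x
      have h2' : ((⌊x⌋ : ℝ) + 1) ≤ (⌊y⌋ : ℝ) := by exact_mod_cast hfl'
      have h3' : (⌊y⌋ : ℝ) ≤ g y := by
        have hfl'' := Int.floor_le y
        have hnn : (0:ℝ) ≤ m * B (Int.fract y) :=
          mul_nonneg (le_of_lt hm0) (hBnn _)
        simp only [hg]
        linarith
      linarith
  -- continuity
  have hBcont : Continuous B := by
    exact continuous_const.max ((continuous_id.sub continuous_const).min
      (continuous_const.sub continuous_id))
  have hcont : Continuous g := by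
    apply Continuous.add continuous_id
    apply Continuous.mul continuous_const
    apply ContinuousOn.comp_fract'' hBcont.continuousOn
    simp only [hB]
    rw [bump_zero_right c d 1 (le_of_lt hd1), bump_zero_left c d 0 (le_of_lt hc0)]
  have hgid_ge : ∀ x, x ≤ g x := by
    intro x
    have : (0:ℝ) ≤ m * B (Int.fract x) := mul_nonneg (le_of_lt hm0) (hBnn _)
    simp only [hg]; linarith
  have hgid_le : ∀ x, g x ≤ x + 1 := by
    intro x
    have : m * B (Int.fract x) ≤ 1 := by nlinarith [hBnn (Int.fract x), hBle1 (Int.fract x)]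
    simp only [hg]; linarith
  have hsurj : Function.Surjective g :=
    hcont.surjective
      (tendsto_atTop_mono hgid_ge tendsto_id)
      (tendsto_atBot_mono hgid_le (tendsto_atBot_add_const_right _ _ tendsto_id))
  set e : ℝ ≃o ℝ := StrictMono.orderIsoOfSurjective g hmono hsurj with he
  have hecoe : ∀ x : ℝ, e.toHomeomorph x = g x := fun x => rfl
  refine ⟨e.toHomeomorph, ?_, ?_, ?_, ?_, ?_⟩
  · intro x y hxy'
    rw [hecoe, hecoe]; exact hmono hxy'
  · intro x
    rw [hecoe, hecoe]
    simp only [hg, Int.fract_add_one]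
    ring
  · intro x
    have h0 : (0:ℝ) ≤ m * B (Int.fract x) := mul_nonneg (le_of_lt hm0) (hBnn _)
    have h1' : m * B (Int.fract x) ≤ m := by nlinarith [hBle1 (Int.fract x)]
    rw [hecoe]
    simp only [hg]
    rw [add_sub_cancel_left, abs_of_nonneg h0]
    linarith
  · intro x hxV
    have hBx : B (Int.fract x) = 0 := by
      by_contra hB0
      have hBin : Int.fract x ∈ Set.Ioo c d := by
        by_contra hin
        simp only [Set.mem_Ioo, not_and_or, not_lt] at hin
        rcases hin with h | h
        · exact hB0 (bump_zero_left c d _ h)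
        · exact hB0 (bump_zero_right c d _ h)
      apply hxV
      apply hball
      rw [Metric.mem_ball, Real.dist_eq, abs_sub_lt_iff]
      obtain ⟨hl, hr'⟩ := hBin
      constructor
      · simp only [hd] at hr'; linarith
      · simp only [hc] at hl; linarith
    rw [hecoe]
    simp only [hg, hBx]
    ring
  · -- φ y₀ = y₀ and φ x₀ ≠ x₀
    have hBy : B b = 0 := by
      rcases hbout with h | h
      · exact bump_zero_left c d _ h
      · exact bump_zero_right c d _ h
    have hgy : g y₀ = y₀ := by simp only [hg, ← hb, hBy]; ring
    have hBa : B a = s := by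
      simp only [hB, hc, hd]
      rw [show a - (a - s) = s by ring, show a + s - a = s by ring, min_self]
      exact max_eq_right (le_of_lt hs0)
    have hgx : g x₀ = x₀ + m * s := by simp only [hg, ← ha, hBa]
    intro hcon
    have hfe : f (e.toHomeomorph x₀) = e.toHomeomorph y₀ := by
      have := congrArg e.toHomeomorph hcon
      rwa [Homeomorph.apply_symm_apply] at this
    rw [hecoe y₀, hecoe x₀, hgy, ← hxy] at hfe
    have hx0 : g x₀ = x₀ := f.injective hfe
    rw [hgx] at hx0
    nlinarith
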